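/- Let ν_K and ν_R be probability measures on [0,∞) with finite second moments. Fix z with Im z > 0. Suppose h ∈ ℂ with Im h > 0 and k ∈ ℂ with Im k < 0 satisfy h = ∫ λ (kλ − z)⁻¹ dν_R(λ) and k = ∫ λ (hλ + 1)⁻¹ dν_K(λ). Then with A(h) = ∫ λ²/|hλ+1|² dν_K(λ) and B(k,z) = ∫ λ²/|kλ−z|² dν_R(λ) and C(k,z) = ∫ λ/|kλ−z|² dν_R(λ), one has A(h) = −Im k / Im h, B(k,z) = −Im h/Im k + (Im z/Im k)·C(k,z), and consequently 1 − A(h)B(k,z) = C(k,z)·Im z/Im h > 0. -/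

import Mathlib

/-!
Take imaginary parts of the two fixed-point equations, using `Im (l / w) = -l Im w / ‖w‖²`:
the equation for `k` gives `Im k = -Im h · A`, the one for `h` gives
`Im h = -Im k · B + Im z · C`, and the rest is algebra. For `l ≥ 0` both summands
`-Im k · l² / ‖k l - z‖²` and `Im z · l / ‖k l - z‖²` are nonnegative, so each is dominated by the
integrable `Im (l / (k l - z))`; this is what allows splitting the integral. Finally `C > 0`:
if `C = 0` then `l / ‖k l - z‖² = 0` a.e., hence `B = 0` and `Im h = 0`.
-/

open MeasureTheory Complex

theorem Complex.im_ofReal_div (x : ℝ) (w : ℂ) : ((x : ℂ) / w).im = -(x * w.im) / ‖w‖ ^ 2 := by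
  rw [div_im, ofReal_re, ofReal_im, Complex.sq_norm]
  ring

theorem im_ofReal_div_mul_add_one (h : ℂ) (l : ℝ) :
    ((l : ℂ) / (h * l + 1)).im = -h.im * (l ^ 2 / ‖h * l + 1‖ ^ 2) := by
  rw [im_ofReal_div]
  simp only [add_im, mul_im, ofReal_re, ofReal_im, one_im]
  ring

theorem im_ofReal_div_mul_sub (k z : ℂ) (l : ℝ) :
    ((l : ℂ) / (k * l - z)).im =
      -k.im * (l ^ 2 / ‖k * l - z‖ ^ 2) + z.im * (l / ‖k * l - z‖ ^ 2) := by
  rw [im_ofReal_div]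
  simp only [sub_im, mul_im, ofReal_re, ofReal_im]
  ring

theorem MeasureTheory.Integrable.of_nonneg_of_const_mul_le {α : Type*} [MeasurableSpace α]
    {μ : Measure α} {f g : α → ℝ} {c : ℝ} (hc : 0 < c) (hg : Integrable g μ)
    (hf : AEStronglyMeasurable f μ) (hf0 : 0 ≤ᵐ[μ] f) (hle : ∀ᵐ x ∂μ, c * f x ≤ g x) : Integrable f μ := by
  refine (hg.const_mul c⁻¹).mono' hf ?_
  filter_upwards [hf0, hle] with x hx0 hx
  rwa [Real.norm_of_nonneg hx0, le_inv_mul_iff₀ hc]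

theorem im_integral_ofReal_div_mul_add_one {ν : Measure ℝ} {h : ℂ}
    (hint : Integrable (fun l : ℝ => (l : ℂ) / (h * l + 1)) ν) :
    (∫ l, (l : ℂ) / (h * l + 1) ∂ν).im = -h.im * ∫ l, l ^ 2 / ‖h * l + 1‖ ^ 2 ∂ν := by
  rw [← integral_const_mul, ← RCLike.im_to_complex, ← integral_im hint]
  simp only [RCLike.im_to_complex, im_ofReal_div_mul_add_one]

section

variable {ν : Measure ℝ} {k z : ℂ}

theorem integrable_im_ofReal_div_mul_sub
    (hint : Integrable (fun l : ℝ => (l : ℂ) / (k * l - z)) ν) :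
    Integrable
      (fun l : ℝ => -k.im * (l ^ 2 / ‖k * l - z‖ ^ 2) + z.im * (l / ‖k * l - z‖ ^ 2)) ν := by
  simpa only [RCLike.im_to_complex, im_ofReal_div_mul_sub] using hint.im

variable (hsupp : ∀ᵐ l ∂ν, 0 ≤ l) (hk : k.im < 0) (hz : 0 < z.im)
  (hint : Integrable (fun l : ℝ => (l : ℂ) / (k * l - z)) ν)
include hsupp hk hz hint

theorem integrable_sq_div_norm_mul_sub_sq :
    Integrable (fun l : ℝ => l ^ 2 / ‖k * l - z‖ ^ 2) ν := by
  refine (integrable_im_ofReal_div_mul_sub hint).of_nonneg_of_const_mul_le (neg_pos.2 hk)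
    (by fun_prop : Measurable _).aestronglyMeasurable
    (by filter_upwards [hsupp] with l hl; positivity) ?_
  filter_upwards [hsupp] with l hl
  have : 0 ≤ z.im * (l / ‖k * l - z‖ ^ 2) := by positivity
  linarith

theorem integrable_div_norm_mul_sub_sq : Integrable (fun l : ℝ => l / ‖k * l - z‖ ^ 2) ν := by
  refine (integrable_im_ofReal_div_mul_sub hint).of_nonneg_of_const_mul_le hz
    (by fun_prop : Measurable _).aestronglyMeasurable
    (by filter_upwards [hsupp] with l hl; positivity) ?_
  filter_upwards [hsupp] with l hl
  have : 0 ≤ -k.im * (l ^ 2 / ‖k * l - z‖ ^ 2) := mul_nonneg (neg_nonneg.2 hk.le) (by positivity)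
  linarith

theorem im_integral_ofReal_div_mul_sub :
    (∫ l, (l : ℂ) / (k * l - z) ∂ν).im =
      -k.im * ∫ l, l ^ 2 / ‖k * l - z‖ ^ 2 ∂ν + z.im * ∫ l, l / ‖k * l - z‖ ^ 2 ∂ν := by
  rw [← integral_const_mul, ← integral_const_mul,
    ← integral_add ((integrable_sq_div_norm_mul_sub_sq hsupp hk hz hint).const_mul _)
      ((integrable_div_norm_mul_sub_sq hsupp hk hz hint).const_mul _),
    ← RCLike.im_to_complex, ← integral_im hint]
  simp only [RCLike.im_to_complex, im_ofReal_div_mul_sub]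

theorem integral_div_norm_mul_sub_sq_pos (him : 0 < (∫ l, (l : ℂ) / (k * l - z) ∂ν).im) :
    0 < ∫ l, l / ‖k * l - z‖ ^ 2 ∂ν := by
  have hc0 : 0 ≤ᵐ[ν] fun l : ℝ => l / ‖k * l - z‖ ^ 2 := by
    filter_upwards [hsupp] with l hl; positivity
  refine (integral_nonneg_of_ae hc0).lt_of_ne fun hC => ?_
  have hc : (fun l : ℝ => l / ‖k * l - z‖ ^ 2) =ᵐ[ν] 0 :=
    (integral_eq_zero_iff_of_nonneg_ae hc0 (integrable_div_norm_mul_sub_sq hsupp hk hz hint)).1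
      hC.symm
  have hB : ∫ l, l ^ 2 / ‖k * l - z‖ ^ 2 ∂ν = 0 := by
    refine integral_eq_zero_of_ae ?_
    filter_upwards [hc] with l hl
    rw [Pi.zero_apply, pow_two, mul_div_assoc, hl, Pi.zero_apply, mul_zero]
  rw [im_integral_ofReal_div_mul_sub hsupp hk hz hint, hB, ← hC] at him
  simp at him

end

theorem fixed_point_imaginary_part_identities_general
    (νK νR : Measure ℝ)
    (hsuppR : ∀ᵐ l ∂νR, 0 ≤ l)
    (z h k : ℂ) (hz : 0 < z.im) (hh : 0 < h.im) (hk : k.im < 0)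
    (hinth : Integrable (fun l : ℝ => (l : ℂ) / (k * l - z)) νR)
    (hintk : Integrable (fun l : ℝ => (l : ℂ) / (h * l + 1)) νK)
    (heqh : h = ∫ l, (l : ℂ) / (k * l - z) ∂νR)
    (heqk : k = ∫ l, (l : ℂ) / (h * l + 1) ∂νK)
    (A B C : ℝ)
    (hA : A = ∫ l, l ^ 2 / ‖h * l + 1‖ ^ 2 ∂νK)
    (hB : B = ∫ l, l ^ 2 / ‖k * l - z‖ ^ 2 ∂νR)
    (hC : C = ∫ l, l / ‖k * l - z‖ ^ 2 ∂νR) :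
    A = -k.im / h.im ∧
      B = -h.im / k.im + (z.im / k.im) * C ∧
      1 - A * B = C * z.im / h.im ∧
      0 < C * z.im / h.im := by
  have hkA : k.im = -h.im * A := by
    rw [hA, ← im_integral_ofReal_div_mul_add_one hintk, ← heqk]
  have hhBC : h.im = -k.im * B + z.im * C := by
    rw [hB, hC, ← im_integral_ofReal_div_mul_sub hsuppR hk hz hinth, ← heqh]
  have hCpos : 0 < C := hC ▸ integral_div_norm_mul_sub_sq_pos hsuppR hk hz hinth (heqh ▸ hh)
  have hAeq : A = -k.im / h.im := by
    rw [eq_div_iff hh.ne']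
    linarith
  have hBeq : B = -h.im / k.im + (z.im / k.im) * C := by
    rw [div_mul_eq_mul_div, ← add_div, eq_div_iff hk.ne]
    linarith
  refine ⟨hAeq, hBeq, ?_, by positivity⟩
  rw [hAeq, hBeq]
  field_simp [hk.ne]
  ring

/-- Identities for the imaginary parts of the solution `(h,k)` of the coupled fixed-point
system: `A(h) = −Im k/Im h`, `B(k,z) = −Im h/Im k + (Im z/Im k) C(k,z)`, and consequently
`1 − A(h)B(k,z) = C(k,z)·Im z/Im h > 0`. -/
theorem fixed_point_imaginary_part_identities
    (νK νR : Measure ℝ) [IsProbabilityMeasure νK] [IsProbabilityMeasure νR]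
    (hsuppK : ∀ᵐ l ∂νK, 0 ≤ l) (hsuppR : ∀ᵐ l ∂νR, 0 ≤ l)
    (hm2K : Integrable (fun l => l ^ 2) νK) (hm2R : Integrable (fun l => l ^ 2) νR)
    (z h k : ℂ) (hz : 0 < z.im) (hh : 0 < h.im) (hk : k.im < 0)
    (hinth : Integrable (fun l : ℝ => (l : ℂ) / (k * l - z)) νR)
    (hintk : Integrable (fun l : ℝ => (l : ℂ) / (h * l + 1)) νK)
    (heqh : h = ∫ l, (l : ℂ) / (k * l - z) ∂νR)
    (heqk : k = ∫ l, (l : ℂ) / (h * l + 1) ∂νK)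
    (A B C : ℝ)
    (hA : A = ∫ l, l ^ 2 / ‖h * l + 1‖ ^ 2 ∂νK)
    (hB : B = ∫ l, l ^ 2 / ‖k * l - z‖ ^ 2 ∂νR)
    (hC : C = ∫ l, l / ‖k * l - z‖ ^ 2 ∂νR) :
    A = -k.im / h.im ∧
      B = -h.im / k.im + (z.im / k.im) * C ∧
      1 - A * B = C * z.im / h.im ∧
      0 < C * z.im / h.im :=
  fixed_point_imaginary_part_identities_general νK νR hsuppR z h k hz hh hk hinth hintk heqh heqk A
    B C hA hB hC
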